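/- arXiv:1111.1836 — 4 statements merged into one kernel-verified Lean document; each statement's English description precedes it below -/
import Mathlib

section
/- Let G be a finite simple graph and H a subgraph of G (both with unit weights) such that deleting the edges of H from G yields a graph L on the same vertex set. Let λ₁ ≤ ... ≤ λ_n and θ₁ ≤ ... ≤ θ_n be the eigenvalues of the combinatorial graph Laplacians of G and L respectively. Then for all k, λ_{k − (|V(H)| − c(H))} ≤ θ_k ≤ λ_{k + |V(H)|}, where V(H) is the set of non-isolated vertices of H, c(H) is the number of connected components of H, λ_j := 0 for j ≤ 0, and λ_j := n for j > n. -/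
/-!
Write `Lap G = Lap L + Lap H`. As `Lap H` is positive semidefinite, the Courant–Fischer
argument gives `θ_k ≤ λ_k ≤ λ_{k + |V(H)|}`. The kernel of `Lap H` is spanned by the indicator
vectors of the components of `H`, each isolated vertex being a component of its own, so
`Lap H` has rank `|V(H)| - c(H)`; hence `Lap G` and `Lap L` agree on a subspace of that
codimension, and Courant–Fischer gives `λ_{k - (|V(H)| - c(H))} ≤ θ_k`. Indices out of range
are covered by `0 ≤ θ_k ≤ n`.

Each Courant–Fischer step finds a nonzero vector in the span of the eigenvectors above one
index, the span of the eigenvectors below another, and the subspace where the two quadratic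
forms compare, by counting dimensions.
-/

open Matrix Module

def extSeq {N : ℕ} (lam : Fin N → ℝ) (lo hi : ℝ) (j : ℤ) : ℝ :=
  if h : 1 ≤ j ∧ j ≤ (N : ℤ) then lam ⟨(j - 1).toNat, by omega⟩
  else if j ≤ 0 then lo else hi

section extSeq

variable {N : ℕ} {lam : Fin N → ℝ} {lo hi x : ℝ} {j : ℤ}

theorem extSeq_le (hlo : j ≤ 0 → lo ≤ x) (hlam : ∀ i : Fin N, (i : ℤ) + 1 = j → lam i ≤ x)
    (hhi : (N : ℤ) < j → hi ≤ x) : extSeq lam lo hi j ≤ x := by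
  unfold extSeq
  split_ifs with hj hj'
  · exact hlam _ (by simp; omega)
  · exact hlo hj'
  · exact hhi (by omega)

theorem le_extSeq (hlo : j ≤ 0 → x ≤ lo) (hlam : ∀ i : Fin N, (i : ℤ) + 1 = j → x ≤ lam i)
    (hhi : (N : ℤ) < j → x ≤ hi) : x ≤ extSeq lam lo hi j := by
  unfold extSeq
  split_ifs with hj hj'
  · exact hlam _ (by simp; omega)
  · exact hlo hj'
  · exact hhi (by omega)

end extSeq

theorem exists_ne_zero_mem_inf_inf {K V : Type*} [Field K] [AddCommGroup V] [Module K V]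
    [FiniteDimensional K V] (U W X : Submodule K V)
    (h : 2 * finrank K V < finrank K U + finrank K W + finrank K X) :
    ∃ x ≠ 0, x ∈ U ∧ x ∈ W ∧ x ∈ X := by
  have h₁ := Submodule.finrank_sup_add_finrank_inf_eq U W
  have h₂ := Submodule.finrank_sup_add_finrank_inf_eq (U ⊓ W) X
  have h₃ := (U ⊔ W).finrank_le
  have h₄ := (U ⊓ W ⊔ X).finrank_le
  obtain ⟨⟨x, hx⟩, hx0⟩ :=
    finrank_pos_iff_exists_ne_zero.mp (by omega : 0 < finrank K ↥(U ⊓ W ⊓ X))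
  exact ⟨x, by simpa using hx0, hx.1.1, hx.1.2, hx.2⟩

theorem finrank_span_image_eq_card {K V ι : Type*} [Field K] [AddCommGroup V] [Module K V]
    {f : ι → V} (hf : LinearIndependent K f) (s : Set ι) [Fintype s] :
    finrank K (Submodule.span K (f '' s)) = Fintype.card s := by
  rw [Set.image_eq_range]
  exact finrank_span_eq_card (hf.comp _ Subtype.val_injective)

theorem dotProduct_self_pos {m R : Type*} [Fintype m] [Ring R] [LinearOrder R]
    [IsStrictOrderedRing R] {v : m → R} (hv : v ≠ 0) : 0 < v ⬝ᵥ v :=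
  (Finset.sum_nonneg fun i _ => mul_self_nonneg (v i)).lt_of_ne'
    (dotProduct_self_eq_zero.not.mpr hv)

section Eigen

variable {m : Type*} [Fintype m] {A : Matrix m m ℝ}

theorem dotProduct_eq_zero_of_eigenvalue_ne (hA : A.IsSymm) {v w : m → ℝ} {a b : ℝ}
    (hv : A *ᵥ v = a • v) (hw : A *ᵥ w = b • w) (hab : a ≠ b) : v ⬝ᵥ w = 0 := by
  have : a * (v ⬝ᵥ w) = b * (v ⬝ᵥ w) := calc
    a * (v ⬝ᵥ w) = (A *ᵥ v) ⬝ᵥ w := by rw [hv, smul_dotProduct, smul_eq_mul]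
    _ = v ⬝ᵥ (A *ᵥ w) := by rw [← vecMul_transpose, hA.eq, dotProduct_mulVec]
    _ = b * (v ⬝ᵥ w) := by rw [hw, dotProduct_smul, smul_eq_mul]
  exact (mul_eq_mul_right_iff.mp this).resolve_left hab

variable {ι : Type*} [Fintype ι] {f : ι → m → ℝ} {μ : ι → ℝ} {x : m → ℝ}

theorem dotProduct_mulVec_nonneg_of_mem_span (hA : A.IsSymm) (hf : ∀ i, A *ᵥ f i = μ i • f i)
    (hμ : ∀ i, 0 ≤ μ i) (hx : x ∈ Submodule.span ℝ (Set.range f)) : 0 ≤ x ⬝ᵥ A *ᵥ x := by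
  obtain ⟨c, rfl⟩ := (Submodule.mem_span_range_iff_exists_fun ℝ).mp hx
  -- `x ⬝ A x` is the squared length of `∑ cᵢ √μᵢ fᵢ`
  set y := ∑ i, (c i * √(μ i)) • f i
  calc 0 ≤ y ⬝ᵥ y := Finset.sum_nonneg fun i _ => mul_self_nonneg (y i)
    _ = _ := by
      simp only [y, mulVec_sum, mulVec_smul, hf, smul_smul, sum_dotProduct, dotProduct_sum,
        smul_dotProduct, dotProduct_smul, smul_eq_mul, Finset.mul_sum]
      refine Finset.sum_congr rfl fun i _ => Finset.sum_congr rfl fun j _ => ?_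
      -- eigenvectors for distinct eigenvalues are orthogonal
      by_cases hij : μ j = μ i
      · rw [hij]
        linear_combination c i * c j * (f j ⬝ᵥ f i) * Real.mul_self_sqrt (hμ i)
      · rw [dotProduct_eq_zero_of_eigenvalue_ne hA (hf j) (hf i) hij]
        ring

theorem mul_dotProduct_self_le_of_mem_span (hA : A.IsSymm) (hf : ∀ i, A *ᵥ f i = μ i • f i)
    {t : ℝ} (ht : ∀ i, t ≤ μ i) (hx : x ∈ Submodule.span ℝ (Set.range f)) :
    t * (x ⬝ᵥ x) ≤ x ⬝ᵥ A *ᵥ x := by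
  classical
  have := dotProduct_mulVec_nonneg_of_mem_span (A := A - t • 1) (hA.sub (isSymm_one.smul t))
    (fun i => by rw [sub_mulVec, hf, smul_mulVec, one_mulVec, sub_smul])
    (fun i => sub_nonneg.mpr (ht i)) hx
  rwa [sub_mulVec, dotProduct_sub, smul_mulVec, one_mulVec, dotProduct_smul, smul_eq_mul,
    sub_nonneg] at this

theorem dotProduct_mulVec_le_of_mem_span (hA : A.IsSymm) (hf : ∀ i, A *ᵥ f i = μ i • f i)
    {t : ℝ} (ht : ∀ i, μ i ≤ t) (hx : x ∈ Submodule.span ℝ (Set.range f)) :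
    x ⬝ᵥ A *ᵥ x ≤ t * (x ⬝ᵥ x) := by
  have := mul_dotProduct_self_le_of_mem_span (A := -A) hA.neg
    (fun i => by rw [neg_mulVec, hf, neg_smul]) (fun i => neg_le_neg (ht i)) hx
  rwa [neg_mulVec, dotProduct_neg, neg_mul, neg_le_neg_iff] at this

theorem eigenvalue_le_of_dotProduct_mulVec_le {v : m → ℝ} {a t : ℝ} (hv : A *ᵥ v = a • v)
    (hv0 : v ≠ 0) (h : v ⬝ᵥ A *ᵥ v ≤ t * (v ⬝ᵥ v)) : a ≤ t := by
  rw [hv, dotProduct_smul, smul_eq_mul] at h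
  exact le_of_mul_le_mul_right h (dotProduct_self_pos hv0)

theorem le_eigenvalue_of_le_dotProduct_mulVec {v : m → ℝ} {a t : ℝ} (hv : A *ᵥ v = a • v)
    (hv0 : v ≠ 0) (h : t * (v ⬝ᵥ v) ≤ v ⬝ᵥ A *ᵥ v) : t ≤ a := by
  rw [hv, dotProduct_smul, smul_eq_mul] at h
  exact le_of_mul_le_mul_right h (dotProduct_self_pos hv0)

end Eigen

structure IsSortedEigenbasis {m : Type*} [Fintype m] {n : ℕ} (A : Matrix m m ℝ)
    (μ : Fin n → ℝ) (f : Fin n → m → ℝ) : Prop where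
  card_eq : Fintype.card m = n
  monotone : Monotone μ
  linearIndependent : LinearIndependent ℝ f
  mulVec_eq : ∀ i, A *ᵥ f i = μ i • f i

namespace IsSortedEigenbasis

variable {m : Type*} [Fintype m] {n : ℕ} {A B : Matrix m m ℝ} {μ ν : Fin n → ℝ}
  {f g : Fin n → m → ℝ}

theorem eigenvalue_le_of_dotProduct_mulVec_le_on (hf : IsSortedEigenbasis A μ f)
    (hg : IsSortedEigenbasis B ν g) (hA : A.IsSymm) (hB : B.IsSymm) {W : Submodule ℝ (m → ℝ)}
    (hAB : ∀ x ∈ W, x ⬝ᵥ A *ᵥ x ≤ x ⬝ᵥ B *ᵥ x) {r : ℕ} (hW : n ≤ finrank ℝ W + r)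
    {i k : Fin n} (hik : (i : ℕ) + r ≤ k) : μ i ≤ ν k := by
  obtain ⟨x, hx0, hxf, hxW, hxg⟩ := exists_ne_zero_mem_inf_inf
    (Submodule.span ℝ (f '' Set.Ici i)) W (Submodule.span ℝ (g '' Set.Iic k)) (by
      rw [finrank_span_image_eq_card hf.linearIndependent,
        finrank_span_image_eq_card hg.linearIndependent, Fintype.card_Ici, Fin.card_Ici,
        Fintype.card_Iic, Fin.card_Iic, finrank_fintype_fun_eq_card, hf.card_eq]
      omega)
  rw [Set.image_eq_range] at hxf hxg
  refine le_of_mul_le_mul_right ?_ (dotProduct_self_pos hx0)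
  calc μ i * (x ⬝ᵥ x) ≤ x ⬝ᵥ A *ᵥ x :=
        mul_dotProduct_self_le_of_mem_span hA (fun j : Set.Ici i => hf.mulVec_eq j)
          (fun j => hf.monotone j.2) hxf
    _ ≤ x ⬝ᵥ B *ᵥ x := hAB x hxW
    _ ≤ ν k * (x ⬝ᵥ x) :=
        dotProduct_mulVec_le_of_mem_span hB (fun j : Set.Iic k => hg.mulVec_eq j)
          (fun j => hg.monotone j.2) hxg

theorem eigenvalue_le_of_eq_add_of_rank_le {C : Matrix m m ℝ} (hf : IsSortedEigenbasis A μ f)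
    (hg : IsSortedEigenbasis B ν g) (hA : A.IsSymm) (hB : B.IsSymm)
    (hABC : A = B + C) {r : ℕ} (hC : C.rank ≤ r) {i k : Fin n} (hik : (i : ℕ) + r ≤ k) :
    μ i ≤ ν k := by
  refine hf.eigenvalue_le_of_dotProduct_mulVec_le_on hg hA hB (W := LinearMap.ker C.mulVecLin)
    (fun x hx => ?_) ?_ hik
  · rw [LinearMap.mem_ker, mulVecLin_apply] at hx
    rw [hABC, add_mulVec, hx, add_zero]
  · have := C.mulVecLin.finrank_range_add_finrank_ker
    rw [finrank_fintype_fun_eq_card, hf.card_eq] at this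
    rw [Matrix.rank] at hC
    omega

theorem eigenvalue_le_of_eq_add_of_posSemidef {C : Matrix m m ℝ} (hf : IsSortedEigenbasis A μ f)
    (hg : IsSortedEigenbasis B ν g) (hA : A.IsSymm) (hB : B.IsSymm)
    (hABC : A = B + C) (hC : C.PosSemidef) (k : Fin n) : ν k ≤ μ k := by
  refine hg.eigenvalue_le_of_dotProduct_mulVec_le_on hf hB hA (W := ⊤) (fun x _ => ?_) (r := 0)
    (by rw [finrank_top, finrank_fintype_fun_eq_card, hf.card_eq]; omega) le_rfl
  have := hC.dotProduct_mulVec_nonneg x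
  rw [star_trivial] at this
  rw [hABC, add_mulVec, dotProduct_add]
  linarith

end IsSortedEigenbasis

namespace SimpleGraph

variable {V : Type*}

theorem Reachable.apply_eq_of_forall_adj {G : SimpleGraph V} {β : Sort*} {f : V → β}
    (hf : ∀ v w, G.Adj v w → f v = f w) {v w : V} (h : G.Reachable v w) : f v = f w := by
  obtain ⟨p⟩ := h
  induction p with
  | nil => rfl
  | cons hadj _ ih => exact (hf _ _ hadj).trans ih

open Classical in
noncomputable def connectedComponentInduceSupportOrIsolated (G : SimpleGraph V) (v : V) :
    (G.induce G.support).ConnectedComponent ⊕ ↥G.supportᶜ :=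
  if hv : v ∈ G.support then .inl ((G.induce G.support).connectedComponentMk ⟨v, hv⟩)
  else .inr ⟨v, hv⟩

noncomputable def connectedComponentEquivInduceSupportSum (G : SimpleGraph V) :
    G.ConnectedComponent ≃ (G.induce G.support).ConnectedComponent ⊕ ↥G.supportᶜ where
  toFun := ConnectedComponent.lift G.connectedComponentInduceSupportOrIsolated
    fun _ _ p _ => p.reachable.apply_eq_of_forall_adj fun v w hvw => by
      simp only [connectedComponentInduceSupportOrIsolated, hvw.mem_support_left,
        hvw.symm.mem_support_left, dif_pos, Sum.inl.injEq]
      exact ConnectedComponent.connectedComponentMk_eq_of_adj (by simpa using hvw)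
  invFun := Sum.elim (ConnectedComponent.map (Embedding.induce G.support).toHom)
    fun v => G.connectedComponentMk v
  left_inv c := c.ind fun v => by
    by_cases hv : v ∈ G.support <;> simp [connectedComponentInduceSupportOrIsolated, hv]
  right_inv := by
    rintro (c | ⟨v, hv⟩)
    · exact c.ind fun v => by simp [connectedComponentInduceSupportOrIsolated, v.2]
    · simp [connectedComponentInduceSupportOrIsolated, dif_neg hv]

theorem card_connectedComponent_add_ncard_support [Finite V] (G : SimpleGraph V) :
    Nat.card G.ConnectedComponent + G.support.ncard
      = Nat.card (G.induce G.support).ConnectedComponent + Nat.card V := by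
  rw [Nat.card_congr G.connectedComponentEquivInduceSupportSum, Nat.card_sum,
    Nat.card_coe_set_eq, ← Set.ncard_add_ncard_compl G.support]
  ring

theorem card_connectedComponent_induce_support_le [Finite V] (G : SimpleGraph V) :
    Nat.card (G.induce G.support).ConnectedComponent ≤ G.support.ncard :=
  Nat.card_le_card_of_surjective _ fun c => c.ind fun v => ⟨v, rfl⟩

section Laplacian

variable [Fintype V] [DecidableEq V]

theorem rank_lapMatrix (G : SimpleGraph V) [DecidableRel G.Adj] :
    (G.lapMatrix ℝ).rank = G.support.ncard - Nat.card (G.induce G.support).ConnectedComponent := by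
  have hker := G.card_connectedComponent_eq_finrank_ker_toLin'_lapMatrix
  have hcount := G.card_connectedComponent_add_ncard_support
  have hle := G.card_connectedComponent_induce_support_le
  have hnullity := (G.lapMatrix ℝ).mulVecLin.finrank_range_add_finrank_ker
  rw [finrank_fintype_fun_eq_card] at hnullity
  rw [Nat.card_eq_fintype_card, Nat.card_eq_fintype_card (α := V)] at hcount
  rw [Matrix.rank]
  change _ = Module.finrank ℝ (LinearMap.ker (G.lapMatrix ℝ).mulVecLin) at hker
  omega

theorem lapMatrix_eq_deleteEdges_add {R : Type*} [Ring R] {G H : SimpleGraph V}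
    [DecidableRel G.Adj] [DecidableRel H.Adj] [DecidableRel (G.deleteEdges H.edgeSet).Adj]
    (hHG : H ≤ G) :
    G.lapMatrix R = (G.deleteEdges H.edgeSet).lapMatrix R + H.lapMatrix R := by
  have hadj : ∀ v w, (if G.Adj v w then (1 : R) else 0) =
      (if (G.deleteEdges H.edgeSet).Adj v w then 1 else 0) + if H.Adj v w then 1 else 0 := by
    intro v w
    by_cases hH : H.Adj v w
    · simp [hH, hHG hH]
    · by_cases hG : G.Adj v w <;> simp [hH, hG]
  have hdeg : G.degMatrix R = (G.deleteEdges H.edgeSet).degMatrix R + H.degMatrix R := by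
    rw [degMatrix, degMatrix, degMatrix, diagonal_add]
    congr 1
    ext v
    rw [degree_eq_sum_if_adj, degree_eq_sum_if_adj, degree_eq_sum_if_adj,
      ← Finset.sum_add_distrib]
    exact Finset.sum_congr rfl fun w _ => hadj v w
  have hadjMat : G.adjMatrix R = (G.deleteEdges H.edgeSet).adjMatrix R + H.adjMatrix R := by
    ext v w
    exact hadj v w
  rw [lapMatrix, lapMatrix, lapMatrix, hdeg, hadjMat]
  abel

theorem dotProduct_mulVec_lapMatrix_le (G : SimpleGraph V) [DecidableRel G.Adj] (x : V → ℝ) :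
    x ⬝ᵥ G.lapMatrix ℝ *ᵥ x ≤ Fintype.card V * (x ⬝ᵥ x) := by
  rw [← toLinearMap₂'_apply', lapMatrix_toLinearMap₂']
  calc (∑ i, ∑ j, if G.Adj i j then (x i - x j) ^ 2 else 0) / 2
      ≤ (∑ i, ∑ j, (x i - x j) ^ 2) / 2 := by
        gcongr with i _ j _
        split_ifs
        exacts [le_rfl, sq_nonneg _]
    _ = Fintype.card V * (x ⬝ᵥ x) - (∑ i, x i) ^ 2 := by
        simp only [sub_sq, Finset.sum_add_distrib, Finset.sum_sub_distrib, Finset.sum_const,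
          Finset.card_univ, nsmul_eq_mul, ← Finset.sum_mul, ← Finset.mul_sum, dotProduct, ← sq]
        ring
    _ ≤ Fintype.card V * (x ⬝ᵥ x) := sub_le_self _ (sq_nonneg _)

theorem eigenvalue_lapMatrix_nonneg (G : SimpleGraph V) [DecidableRel G.Adj] {v : V → ℝ} {a : ℝ}
    (hv : G.lapMatrix ℝ *ᵥ v = a • v) (hv0 : v ≠ 0) : 0 ≤ a :=
  le_eigenvalue_of_le_dotProduct_mulVec hv hv0 <| by
    simpa using (posSemidef_lapMatrix ℝ G).dotProduct_mulVec_nonneg v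

theorem eigenvalue_lapMatrix_le_card (G : SimpleGraph V) [DecidableRel G.Adj] {v : V → ℝ} {a : ℝ}
    (hv : G.lapMatrix ℝ *ᵥ v = a • v) (hv0 : v ≠ 0) : a ≤ Fintype.card V :=
  eigenvalue_le_of_dotProduct_mulVec_le hv hv0 (G.dotProduct_mulVec_lapMatrix_le v)

end Laplacian

end SimpleGraph

open SimpleGraph IsSortedEigenbasis in
/-- **Interlacing for the combinatorial graph Laplacian under deletion of a subgraph.**
Let `G` be a finite simple graph on `n` vertices, `H ≤ G` a subgraph, and `L` the graph
obtained by deleting the edges of `H` from `G`. If `λ₁ ≤ … ≤ λ_n` and `θ₁ ≤ … ≤ θ_n` are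
the eigenvalues of the combinatorial Laplacians of `G` and `L` (each realized by a
linearly independent eigenbasis), then
`λ_{k − (|V(H)| − c(H))} ≤ θ_k ≤ λ_{k + |V(H)|}`, where `V(H)` is the set of
non-isolated vertices of `H`, `c(H)` the number of connected components of the graph `H`
induced on `V(H)`, `λ_j := 0` for `j ≤ 0` and `λ_j := n` for `j > n`. -/
theorem stmt_6 {n : ℕ} (G H L : SimpleGraph (Fin n))
    [DecidableRel G.Adj] [DecidableRel H.Adj] [DecidableRel L.Adj]
    (hHG : H ≤ G) (hL : L = G.deleteEdges H.edgeSet)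
    (lam theta : Fin n → ℝ)
    (hlam : Monotone lam) (htheta : Monotone theta)
    (flam : Fin n → Fin n → ℝ) (hfli : LinearIndependent ℝ flam)
    (hfleig : ∀ i, (G.lapMatrix ℝ).mulVec (flam i) = lam i • flam i)
    (fth : Fin n → Fin n → ℝ) (hfti : LinearIndependent ℝ fth)
    (hfteig : ∀ i, (L.lapMatrix ℝ).mulVec (fth i) = theta i • fth i)
    (k : Fin n) :
    extSeq lam 0 n (((k : ℕ) : ℤ) + 1
        - (({v : Fin n | ∃ u, H.Adj v u}.ncard : ℤ)
          - (Nat.card (H.induce {v : Fin n | ∃ u, H.Adj v u}).ConnectedComponent : ℤ)))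
      ≤ theta k ∧
    theta k ≤ extSeq lam 0 n (((k : ℕ) : ℤ) + 1 + ({v : Fin n | ∃ u, H.Adj v u}.ncard : ℤ)) := by
  subst hL
  have hG : IsSortedEigenbasis (G.lapMatrix ℝ) lam flam :=
    ⟨Fintype.card_fin n, hlam, hfli, hfleig⟩
  have hL : IsSortedEigenbasis ((G.deleteEdges H.edgeSet).lapMatrix ℝ) theta fth :=
    ⟨Fintype.card_fin n, htheta, hfti, hfteig⟩
  have hsum := lapMatrix_eq_deleteEdges_add (R := ℝ) hHG
  have hrank := rank_lapMatrix H
  have hcW := card_connectedComponent_induce_support_le H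
  have hθ0 := eigenvalue_lapMatrix_nonneg _ (hfteig k) (hfti.ne_zero k)
  have hθn := eigenvalue_lapMatrix_le_card _ (hfteig k) (hfti.ne_zero k)
  rw [Fintype.card_fin] at hθn
  rw [show {v | ∃ u, H.Adj v u} = H.support from rfl]
  constructor
  · refine extSeq_le (fun _ => hθ0) (fun i hi => ?_) (fun h => by omega)
    exact hG.eigenvalue_le_of_eq_add_of_rank_le hL (isSymm_lapMatrix ℝ G) (isSymm_lapMatrix ℝ _)
      hsum hrank.le (by omega)
  · refine le_extSeq (fun h => by omega) (fun i hi => ?_) (fun _ => hθn)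
    exact (hG.eigenvalue_le_of_eq_add_of_posSemidef hL (isSymm_lapMatrix ℝ G)
      (isSymm_lapMatrix ℝ _) hsum (posSemidef_lapMatrix ℝ H) k).trans
      (hlam (Fin.le_def.mpr (by omega)))
end

section
/- Let K be a finite simplicial complex with unit weights on all simplices and L a subcomplex of K with S_n(L) = S_n(K) (same n-skeleton in dimension n). Then the eigenvalues of the combinatorial up-Laplacians satisfy θ_k ≤ λ_k for all k, where θ₁ ≤ ... ≤ θ_N and λ₁ ≤ ... ≤ λ_N are the eigenvalues of L^{up}_n(L) and L^{up}_n(K) respectively. -/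
/-- A finite abstract simplicial complex on vertex set `Fin m`:
a collection of nonempty finite vertex sets closed under taking nonempty subsets. -/
def IsComplex {m : ℕ} (K : Finset (Finset (Fin m))) : Prop :=
  (∀ s ∈ K, s.Nonempty) ∧ ∀ s ∈ K, ∀ t, t ⊆ s → t.Nonempty → t ∈ K

/-- The `n`-dimensional faces (simplices with `n+1` vertices) of `K`. -/
def faces {m : ℕ} (K : Finset (Finset (Fin m))) (n : ℕ) : Finset (Finset (Fin m)) :=
  K.filter fun s => s.card = n + 1

/-- The incidence sign `(-1)^i` where `i` is the position of vertex `v` in the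
canonically (increasingly) ordered vertex list of the simplex `s`. -/
def incSign {m : ℕ} (s : Finset (Fin m)) (v : Fin m) : ℝ :=
  (-1 : ℝ) ^ ((s.sort (· ≤ ·)).idxOf v)

/-- Simplicial coboundary with respect to canonical orientations:
`(δ f)([v₀,…,v_{n+1}]) = Σᵢ (-1)ⁱ f([v₀,…,v̂ᵢ,…,v_{n+1}])`. -/
def coboundary {m : ℕ} (f : Finset (Fin m) → ℝ) (s : Finset (Fin m)) : ℝ :=
  ∑ v ∈ s, incSign s v * f (s.erase v)

/-- The weighted up-Laplacian `L^{up}_n = δ_n^* δ_n` on `n`-cochains, where the formal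
adjoint `δ_n^*` is taken with respect to the weighted inner products
`(f,g) = Σ_F w(F) f(F) g(F)` and is extended by zero on simplices of weight zero. -/
noncomputable def upLap {m : ℕ} (K : Finset (Finset (Fin m))) (w : Finset (Fin m) → ℝ) (n : ℕ)
    (f : Finset (Fin m) → ℝ) (F : Finset (Fin m)) : ℝ :=
  if w F = 0 then 0 else
    (w F)⁻¹ * ∑ s ∈ (faces K (n + 1)).filter (fun s => F ⊆ s),
      w s * (∑ v ∈ s \ F, incSign s v) * coboundary f s

/-- `lam : Fin N → ℝ` is the non-decreasing enumeration (with multiplicity) of the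
eigenvalues of the weighted up-Laplacian `L^{up}_n(K, w)` acting on `C^n(K, ℝ)`:
there is a linearly independent eigenbasis realizing these eigenvalues. -/
def eigenseq {m : ℕ} (K : Finset (Finset (Fin m))) (w : Finset (Fin m) → ℝ) (n : ℕ)
    {N : ℕ} (lam : Fin N → ℝ) : Prop :=
  Monotone lam ∧ N = (faces K n).card ∧
    ∃ f : Fin N → (Finset (Fin m) → ℝ),
      LinearIndependent ℝ f ∧
      (∀ i F, F ∉ faces K n → f i F = 0) ∧
      (∀ i F, F ∈ faces K n → upLap K w n (f i) F = lam i * f i F)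

/-!
Both up-Laplacians are symmetric for the standard inner product, with quadratic form
`(L^{up} x, x) = Σ_s (δx)(s)²` over the `(n+1)`-simplices `s`; passing from `K` to `L` only drops
nonnegative terms. The eigenvalue inequality is then min–max: by a dimension count some `x ≠ 0`
lies both in the span of the `L`-eigenvectors of index `≥ k` and in that of the `K`-eigenvectors
of index `≤ k`, and `θ_k ‖x‖² ≤ (L^{up}(L) x, x) ≤ (L^{up}(K) x, x) ≤ λ_k ‖x‖²`. The outer
Rayleigh bounds hold because eigenspaces of a symmetric operator are mutually orthogonal.
-/

open scoped RealInnerProductSpace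
open Module Module.End Submodule

section Rayleigh

variable {E : Type*} [NormedAddCommGroup E] [InnerProductSpace ℝ E] {T : E →ₗ[ℝ] E}

lemma LinearMap.IsSymmetric.inner_map_sum_eigenspace (hT : T.IsSymmetric) (s : Finset ℝ)
    (y : ∀ μ, eigenspace T μ) :
    ⟪T (∑ μ ∈ s, (y μ : E)), ∑ μ ∈ s, (y μ : E)⟫ = ∑ μ ∈ s, μ * ‖(y μ : E)‖ ^ 2 := by
  have hTy : T (∑ μ ∈ s, (y μ : E)) = ∑ μ ∈ s, ((μ • y μ : eigenspace T μ) : E) := by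
    simp only [map_sum, mem_eigenspace_iff.mp (y _).2, Submodule.coe_smul]
  simpa [hTy, real_inner_smul_left, real_inner_self_eq_norm_sq] using
    hT.orthogonalFamily_eigenspaces.inner_sum (fun μ => μ • y μ) y s

lemma LinearMap.IsSymmetric.norm_sum_eigenspace_sq (hT : T.IsSymmetric) (s : Finset ℝ)
    (y : ∀ μ, eigenspace T μ) :
    ‖∑ μ ∈ s, (y μ : E)‖ ^ 2 = ∑ μ ∈ s, ‖(y μ : E)‖ ^ 2 := by
  simpa using hT.orthogonalFamily_eigenspaces.norm_sum y s

lemma LinearMap.IsSymmetric.inner_map_self_le_of_mem_iSup (hT : T.IsSymmetric) {s : Finset ℝ}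
    {c : ℝ} (hs : ∀ μ ∈ s, μ ≤ c) {x : E} (hx : x ∈ ⨆ μ ∈ s, eigenspace T μ) :
    ⟪T x, x⟫ ≤ c * ‖x‖ ^ 2 := by
  obtain ⟨y, rfl⟩ := (mem_iSup_finset_iff_exists_sum _ x).mp hx
  rw [hT.inner_map_sum_eigenspace, hT.norm_sum_eigenspace_sq, Finset.mul_sum]
  exact Finset.sum_le_sum fun μ hμ => mul_le_mul_of_nonneg_right (hs μ hμ) (sq_nonneg _)

lemma LinearMap.IsSymmetric.le_inner_map_self_of_mem_iSup (hT : T.IsSymmetric) {s : Finset ℝ}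
    {c : ℝ} (hs : ∀ μ ∈ s, c ≤ μ) {x : E} (hx : x ∈ ⨆ μ ∈ s, eigenspace T μ) :
    c * ‖x‖ ^ 2 ≤ ⟪T x, x⟫ := by
  obtain ⟨y, rfl⟩ := (mem_iSup_finset_iff_exists_sum _ x).mp hx
  rw [hT.inner_map_sum_eigenspace, hT.norm_sum_eigenspace_sq, Finset.mul_sum]
  exact Finset.sum_le_sum fun μ hμ => mul_le_mul_of_nonneg_right (hs μ hμ) (sq_nonneg _)

lemma span_image_le_iSup_eigenspace {ι : Type*} {e : ι → E} {μ : ι → ℝ}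
    (heig : ∀ i, T (e i) = μ i • e i) (S : Finset ι) :
    span ℝ (e '' S) ≤ ⨆ ν ∈ S.image μ, eigenspace T ν := by
  rw [span_le]
  rintro _ ⟨i, hi, rfl⟩
  exact mem_iSup_of_mem (μ i) (mem_iSup_of_mem (Finset.mem_image_of_mem μ hi)
    (mem_eigenspace_iff.mpr (heig i)))

end Rayleigh

lemma Submodule.exists_mem_inf_ne_zero_of_finrank_lt {K V : Type*} [DivisionRing K]
    [AddCommGroup V] [Module K V] [FiniteDimensional K V] {U W₁ W₂ : Submodule K V}
    (h₁ : W₁ ≤ U) (h₂ : W₂ ≤ U) (hlt : finrank K U < finrank K W₁ + finrank K W₂) :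
    ∃ x ∈ W₁ ⊓ W₂, x ≠ 0 := by
  apply exists_mem_ne_zero_of_ne_bot
  rw [Ne, ← Submodule.finrank_eq_zero]
  have := Submodule.finrank_sup_add_finrank_inf_eq W₁ W₂
  have := Submodule.finrank_mono (sup_le h₁ h₂)
  omega

lemma LinearIndependent.finrank_span_image {K V ι : Type*} [DivisionRing K]
    [AddCommGroup V] [Module K V] {f : ι → V} (hf : LinearIndependent K f) (S : Finset ι) :
    finrank K (span K (f '' S)) = S.card := by
  rw [Set.image_eq_range]
  exact (finrank_span_eq_card (hf.comp _ Subtype.val_injective)).trans (Fintype.card_coe S)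

theorem LinearMap.IsSymmetric.eigenvalue_le_of_inner_map_self_le {E : Type*}
    [NormedAddCommGroup E] [InnerProductSpace ℝ E] [FiniteDimensional ℝ E]
    {U : Submodule ℝ E} {N : ℕ} (hU : finrank ℝ U ≤ N) {T₁ T₂ : E →ₗ[ℝ] E}
    (h₁ : T₁.IsSymmetric) (h₂ : T₂.IsSymmetric) (hle : ∀ x, ⟪T₁ x, x⟫ ≤ ⟪T₂ x, x⟫)
    {θ μ : Fin N → ℝ} (hθ : Monotone θ) (hμ : Monotone μ) {f g : Fin N → E}
    (hf : LinearIndependent ℝ f) (hg : LinearIndependent ℝ g)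
    (hfU : ∀ i, f i ∈ U) (hgU : ∀ i, g i ∈ U)
    (hfe : ∀ i, T₁ (f i) = θ i • f i) (hge : ∀ i, T₂ (g i) = μ i • g i) (k : Fin N) :
    θ k ≤ μ k := by
  classical
  have hV : span ℝ (f '' Finset.Ici k) ≤ U :=
    span_le.mpr (Set.image_subset_iff.mpr fun i _ => hfU i)
  have hW : span ℝ (g '' Finset.Iic k) ≤ U :=
    span_le.mpr (Set.image_subset_iff.mpr fun i _ => hgU i)
  obtain ⟨x, ⟨hxV, hxW⟩, hx⟩ := exists_mem_inf_ne_zero_of_finrank_lt hV hW (by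
    rw [hf.finrank_span_image, hg.finrank_span_image, Fin.card_Ici, Fin.card_Iic]
    omega)
  have hθx : θ k * ‖x‖ ^ 2 ≤ ⟪T₁ x, x⟫ := h₁.le_inner_map_self_of_mem_iSup
    (by simpa using fun i hi => hθ hi) (span_image_le_iSup_eigenspace hfe _ hxV)
  have hμx : ⟪T₂ x, x⟫ ≤ μ k * ‖x‖ ^ 2 := h₂.inner_map_self_le_of_mem_iSup
    (by simpa using fun i hi => hμ hi) (span_image_le_iSup_eigenspace hge _ hxW)
  have hx2 : 0 < ‖x‖ ^ 2 := by positivity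
  exact le_of_mul_le_mul_right ((hθx.trans (hle x)).trans hμx) hx2

section Combinatorics

variable {m : ℕ} {K : Finset (Finset (Fin m))} {n : ℕ}

lemma IsComplex.image_erase_eq_filter_faces (hK : IsComplex K) {s : Finset (Fin m)}
    (hs : s ∈ faces K (n + 1)) : s.image s.erase = (faces K n).filter (· ⊆ s) := by
  obtain ⟨hsK, hcard⟩ := Finset.mem_filter.mp hs
  ext F
  simp only [faces, Finset.mem_image, Finset.mem_filter]
  constructor
  · rintro ⟨v, hv, rfl⟩
    have hcard' : (s.erase v).card = n + 1 := by rw [Finset.card_erase_of_mem hv, hcard]; rfl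
    exact ⟨⟨hK.2 s hsK _ (Finset.erase_subset v s) (Finset.card_pos.mp (by omega)), hcard'⟩,
      Finset.erase_subset v s⟩
  · rintro ⟨⟨-, hFcard⟩, hFs⟩
    obtain ⟨v, hv, hvF⟩ := Finset.exists_of_ssubset (hFs.ssubset_of_ne (by rintro rfl; omega))
    refine ⟨v, hv, (Finset.eq_of_subset_of_card_le (Finset.subset_erase.mpr ⟨hFs, hvF⟩) ?_).symm⟩
    rw [Finset.card_erase_of_mem hv]
    omega

lemma IsComplex.coboundary_eq_sum_faces (hK : IsComplex K) {s : Finset (Fin m)}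
    (hs : s ∈ faces K (n + 1)) (g : Finset (Fin m) → ℝ) :
    coboundary g s = ∑ F ∈ (faces K n).filter (· ⊆ s), (∑ v ∈ s \ F, incSign s v) * g F := by
  rw [← hK.image_erase_eq_filter_faces hs, Finset.sum_image (Finset.erase_injOn s)]
  refine Finset.sum_congr rfl fun v hv => ?_
  rw [Finset.sdiff_erase_self hv, Finset.sum_singleton]

lemma IsComplex.sum_upLap_mul (hK : IsComplex K) (f g : Finset (Fin m) → ℝ) :
    ∑ F ∈ faces K n, upLap K (fun _ => 1) n f F * g F =
      ∑ s ∈ faces K (n + 1), coboundary f s * coboundary g s := by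
  have hupLap : ∀ F, upLap K (fun _ => 1) n f F * g F = ∑ s ∈ (faces K (n + 1)).filter (F ⊆ ·),
      (∑ v ∈ s \ F, incSign s v) * coboundary f s * g F := by
    simp [upLap, Finset.sum_mul]
  simp only [hupLap]
  rw [Finset.sum_comm' (t' := faces K (n + 1)) (s' := fun s => (faces K n).filter (· ⊆ s))
    (by intro F s; simp only [Finset.mem_filter]; tauto)]
  refine Finset.sum_congr rfl fun s hs => ?_
  rw [hK.coboundary_eq_sum_faces hs g, Finset.mul_sum]
  exact Finset.sum_congr rfl fun F _ => by ring

variable (K n) in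
/-- `upLap` is cut off outside the `n`-faces, so that `C^n(K)` is invariant and the operator is
symmetric on all of `ℝ^{Finset (Fin m)}`. -/
noncomputable def upLapOp :
    EuclideanSpace ℝ (Finset (Fin m)) →ₗ[ℝ] EuclideanSpace ℝ (Finset (Fin m)) where
  toFun x := WithLp.toLp 2 fun F => if F ∈ faces K n then upLap K (fun _ => 1) n x F else 0
  map_add' x y := by
    ext F
    by_cases hF : F ∈ faces K n <;> simp [hF, upLap, coboundary, mul_add, Finset.sum_add_distrib]
  map_smul' c x := by
    ext F
    by_cases hF : F ∈ faces K n <;> simp [hF, upLap, coboundary, Finset.mul_sum, mul_left_comm]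

lemma upLapOp_apply (x : EuclideanSpace ℝ (Finset (Fin m))) (F : Finset (Fin m)) :
    upLapOp K n x F = if F ∈ faces K n then upLap K (fun _ => 1) n x F else 0 := rfl

lemma IsComplex.inner_upLapOp (hK : IsComplex K) (x y : EuclideanSpace ℝ (Finset (Fin m))) :
    ⟪upLapOp K n x, y⟫ = ∑ s ∈ faces K (n + 1), coboundary x s * coboundary y s := by
  calc ⟪upLapOp K n x, y⟫
      = ∑ F, if F ∈ faces K n then upLap K (fun _ => 1) n x F * y F else 0 := by
        simp [PiLp.inner_apply, upLapOp_apply, mul_comm]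
    _ = ∑ s ∈ faces K (n + 1), coboundary x s * coboundary y s := by
        rw [Finset.sum_ite_mem_eq, hK.sum_upLap_mul]

lemma IsComplex.isSymmetric_upLapOp (hK : IsComplex K) : (upLapOp K n).IsSymmetric := by
  intro x y
  rw [hK.inner_upLapOp, real_inner_comm, hK.inner_upLapOp]
  exact Finset.sum_congr rfl fun s _ => mul_comm _ _

lemma faces_mono {L : Finset (Finset (Fin m))} (hLK : L ⊆ K) : faces L n ⊆ faces K n :=
  Finset.filter_subset_filter _ hLK

lemma IsComplex.inner_upLapOp_self_le {L : Finset (Finset (Fin m))} (hK : IsComplex K)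
    (hL : IsComplex L) (hLK : L ⊆ K) (x : EuclideanSpace ℝ (Finset (Fin m))) :
    ⟪upLapOp L n x, x⟫ ≤ ⟪upLapOp K n x, x⟫ := by
  rw [hL.inner_upLapOp, hK.inner_upLapOp]
  exact Finset.sum_le_sum_of_subset_of_nonneg (faces_mono hLK) fun s _ _ => mul_self_nonneg _

variable (K n) in
noncomputable def cochainSpace : Submodule ℝ (EuclideanSpace ℝ (Finset (Fin m))) :=
  (Pi.spanSubset ℝ (faces K n : Set (Finset (Fin m)))).comap
    (WithLp.linearEquiv 2 ℝ (Finset (Fin m) → ℝ)).toLinearMap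

lemma mem_cochainSpace {x : EuclideanSpace ℝ (Finset (Fin m))} :
    x ∈ cochainSpace K n ↔ ∀ F ∉ faces K n, x F = 0 := by
  simp [cochainSpace, Pi.mem_spanSubset_iff]

lemma finrank_cochainSpace : finrank ℝ (cochainSpace K n) = (faces K n).card := by
  rw [cochainSpace, Submodule.comap_equiv_eq_map_symm, LinearEquiv.finrank_map_eq,
    Pi.dim_spanSubset, Set.ncard_coe_finset]

lemma cochainSpace_mono {L : Finset (Finset (Fin m))} (hLK : L ⊆ K) :
    cochainSpace L n ≤ cochainSpace K n := fun _ hx =>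
  mem_cochainSpace.mpr fun F hF => mem_cochainSpace.mp hx F fun hFL => hF (faces_mono hLK hFL)

lemma eigenseq.exists_eigenbasis {N : ℕ} {lam : Fin N → ℝ} (h : eigenseq K (fun _ => 1) n lam) :
    ∃ f : Fin N → EuclideanSpace ℝ (Finset (Fin m)), LinearIndependent ℝ f ∧
      (∀ i, f i ∈ cochainSpace K n) ∧ ∀ i, upLapOp K n (f i) = lam i • f i := by
  obtain ⟨-, -, f, hf, hsupp, heig⟩ := h
  refine ⟨fun i => WithLp.toLp 2 (f i),
    hf.map' (WithLp.linearEquiv 2 ℝ _).symm.toLinearMap (LinearEquiv.ker _),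
    fun i => mem_cochainSpace.mpr (hsupp i), fun i => ?_⟩
  ext F
  by_cases hF : F ∈ faces K n
  · simp [upLapOp_apply, hF, heig i F hF]
  · simp [upLapOp_apply, hF, hsupp i F hF]

end Combinatorics

theorem stmt_9_general {m n N : ℕ} (K L : Finset (Finset (Fin m)))
    (hK : IsComplex K) (hL : IsComplex L) (hLK : L ⊆ K)
    (lam theta : Fin N → ℝ)
    (hlam : eigenseq K (fun _ => 1) n lam)
    (htheta : eigenseq L (fun _ => 1) n theta) :
    ∀ k, theta k ≤ lam k := by
  obtain ⟨g, hg, hgK, hge⟩ := hlam.exists_eigenbasis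
  obtain ⟨f, hf, hfL, hfe⟩ := htheta.exists_eigenbasis
  have hdim : finrank ℝ (cochainSpace K n) ≤ N := (finrank_cochainSpace.trans hlam.2.1.symm).le
  exact hL.isSymmetric_upLapOp.eigenvalue_le_of_inner_map_self_le hdim hK.isSymmetric_upLapOp
    (hK.inner_upLapOp_self_le hL hLK) htheta.1 hlam.1 hf hg
    (fun i => cochainSpace_mono hLK (hfL i)) hgK hfe hge

/-- **Courant–Weyl inequality (Corollary 2.17).** If `K` is a finite complex with unit
weights and `L ⊆ K` is a subcomplex with the same `n`-simplices as `K`, then the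
eigenvalues of the combinatorial up-Laplacians satisfy `θ_k ≤ λ_k` for all `k`. -/
theorem stmt_9 {m n N : ℕ} (K L : Finset (Finset (Fin m)))
    (hK : IsComplex K) (hL : IsComplex L) (hLK : L ⊆ K)
    (hskel : faces L n = faces K n)
    (lam theta : Fin N → ℝ)
    (hlam : eigenseq K (fun _ => 1) n lam)
    (htheta : eigenseq L (fun _ => 1) n theta) :
    ∀ k, theta k ≤ lam k :=
  stmt_9_general K L hK hL hLK lam theta hlam htheta
end

section
/- Let (L, w_L) be a weighted simplicial complex on N vertices with positive weights, and let θ_max be the largest eigenvalue of the weighted up-Laplacian L^{up}_n(L, w_L) where all weights are at most 1. Then θ_max ≤ N / min{ w_L(F) : F ∈ S_n(L) }. In particular, if w_L ≡ 1 (the combinatorial Laplacian), θ_max ≤ N. -/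
/-!
For an eigencochain `f` with eigenvalue `θ`, the adjoint identity `⟨f, L^{up} f⟩_w = ‖δf‖²_w`
gives `θ ‖f‖²_w = ‖δf‖²_w`. As all weights are at most `1`, `‖δf‖²_w` is bounded by the
unweighted `‖δf‖²` computed in the full simplex on the `N` vertices, where `δ*δ + δδ* = N`;
hence `‖δf‖² ≤ N ‖f‖² ≤ N ‖f‖²_w / min w`.
-/

open Finset

theorem List.idxOf_eq_length_filter_lt {α : Type*} [LinearOrder α] {l : List α}
    (hl : l.Pairwise (· < ·)) {v : α} (hv : v ∈ l) :
    l.idxOf v = (l.filter (· < v)).length := by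
  induction l with
  | nil => simp at hv
  | cons a l ih =>
    rw [List.pairwise_cons] at hl
    rcases eq_or_ne a v with rfl | hav
    · have : l.filter (· < a) = [] := List.filter_eq_nil_iff.2 fun u hu => by
        simpa using (hl.1 u hu).le
      simp [this]
    · have hvl : v ∈ l := (List.mem_cons.1 hv).resolve_left hav.symm
      simp [List.idxOf_cons_ne _ hav, hl.1 v hvl, ih hl.2 hvl]

theorem incSign_eq_neg_one_pow {m : ℕ} {s : Finset (Fin m)} {v : Fin m} (hv : v ∈ s) :
    incSign s v = (-1) ^ #{u ∈ s | u < v} := by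
  have hcard : #{u ∈ s | u < v} = ((s.sort (· ≤ ·)).filter (· < v)).length := by
    rw [← Multiset.coe_card, ← Multiset.filter_coe, sort_eq]; rfl
  rw [incSign, hcard, List.idxOf_eq_length_filter_lt (sortedLT_sort s).pairwise (by simpa)]

theorem incSign_sq {m : ℕ} (s : Finset (Fin m)) (v : Fin m) : incSign s v ^ 2 = 1 := by
  rw [incSign, ← pow_mul, mul_comm, (even_two_mul _).neg_one_pow]

theorem incSign_erase_mul_incSign_erase {m : ℕ} {s : Finset (Fin m)} {u v : Fin m}
    (hu : u ∈ s) (hv : v ∈ s) (huv : u ≠ v) :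
    incSign (s.erase v) u * incSign (s.erase u) v = -(incSign s u * incSign s v) := by
  wlog hlt : u < v generalizing u v
  · rw [mul_comm, this hv hu huv.symm (huv.lt_or_gt.resolve_left hlt), mul_comm (incSign s v)]
  have hu' : u ∈ {x ∈ s | x < v} := by simp [hu, hlt]
  rw [incSign_eq_neg_one_pow (mem_erase.2 ⟨huv, hu⟩),
    incSign_eq_neg_one_pow (mem_erase.2 ⟨huv.symm, hv⟩), incSign_eq_neg_one_pow hu,
    incSign_eq_neg_one_pow hv, filter_erase, filter_erase,
    erase_eq_of_notMem (by simp [hlt.not_gt]), ← card_erase_add_one hu', pow_succ]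
  ring

theorem sum_powersetCard_succ_sum_erase {α : Type*} [Fintype α] [DecidableEq α] {M : Type*}
    [AddCommMonoid M] (k : ℕ) (h : Finset α → α → M) :
    ∑ s ∈ powersetCard (k + 1) univ, ∑ u ∈ s, h (s.erase u) u =
      ∑ F ∈ powersetCard k univ, ∑ u ∈ Fᶜ, h F u := by
  rw [sum_sigma', sum_sigma']
  refine sum_nbij' (fun p => ⟨p.1.erase p.2, p.2⟩) (fun p => ⟨insert p.2 p.1, p.2⟩)
    ?_ ?_ ?_ ?_ fun _ _ => rfl
  · rintro ⟨s, u⟩ hp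
    simp only [mem_sigma, mem_powersetCard_univ] at hp
    simp [card_erase_of_mem hp.2, hp.1]
  · rintro ⟨F, u⟩ hp
    simp only [mem_sigma, mem_powersetCard_univ, mem_compl] at hp
    simp [card_insert_of_notMem hp.2, hp.1]
  · rintro ⟨s, u⟩ hp
    simp [insert_erase (mem_sigma.1 hp).2]
  · rintro ⟨F, u⟩ hp
    simp [erase_insert (mem_compl.1 (mem_sigma.1 hp).2)]

theorem sum_sum_sum_erase_comm {α β : Type*} [Fintype α] [DecidableEq α] {M : Type*}
    [AddCommMonoid M] (P : Finset β) (A : β → Finset α) (f : β → α → α → M) :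
    ∑ s ∈ P, ∑ u ∈ A s, ∑ v ∈ (A s).erase u, f s u v =
      ∑ u, ∑ v ∈ univ.erase u, ∑ s ∈ P with u ∈ A s ∧ v ∈ A s, f s u v := by
  rw [sum_comm' (t' := univ) (s' := fun u => {s ∈ P | u ∈ A s}) (by simp)]
  exact sum_congr rfl fun u _ => sum_comm' (by simp; tauto)

theorem sq_sum_eq_sum_sq_add_sum_sum_erase {α : Type*} [DecidableEq α] (s : Finset α)
    (e a : α → ℝ) (he : ∀ u ∈ s, e u ^ 2 = 1) :
    (∑ u ∈ s, e u * a u) ^ 2 =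
      ∑ u ∈ s, a u ^ 2 + ∑ u ∈ s, ∑ v ∈ s.erase u, e u * e v * a u * a v := by
  rw [sq, sum_mul_sum, ← sum_add_distrib]
  refine sum_congr rfl fun u hu => ?_
  rw [← add_sum_erase s _ hu]
  congr 1
  · linear_combination a u ^ 2 * he u hu
  · exact sum_congr rfl fun v _ => by ring

/-- The formal adjoint of `coboundary` for the full simplex with unit weights. -/
def coboundaryAdjoint {m : ℕ} (g : Finset (Fin m) → ℝ) (t : Finset (Fin m)) : ℝ :=
  ∑ u ∈ tᶜ, incSign (insert u t) u * g (insert u t)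

theorem sum_cross_terms_coboundary_eq_neg {m : ℕ} (k : ℕ) (g : Finset (Fin m) → ℝ) :
    ∑ s ∈ powersetCard (k + 2) univ, ∑ u ∈ s, ∑ v ∈ s.erase u,
        incSign s u * incSign s v * g (s.erase u) * g (s.erase v) =
      -∑ t ∈ powersetCard k univ, ∑ u ∈ tᶜ, ∑ v ∈ tᶜ.erase u,
        incSign (insert u t) u * incSign (insert v t) v * g (insert u t) * g (insert v t) := by
  simp only [← sum_neg_distrib]
  rw [sum_sum_sum_erase_comm, sum_sum_sum_erase_comm]
  refine sum_congr rfl fun u _ => sum_congr rfl fun v hv => ?_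
  have hvu : v ≠ u := (mem_erase.1 hv).1
  -- pair `s` with `t = s \ {u, v}`: then `s.erase u = insert v t` and `s.erase v = insert u t`
  refine sum_nbij' (fun s => (s.erase u).erase v) (fun t => insert u (insert v t))
    ?_ ?_ ?_ ?_ ?_
  · intro s hs
    simp only [mem_filter, mem_powersetCard_univ] at hs ⊢
    obtain ⟨hcard, hus, hvs⟩ := hs
    simp [card_erase_of_mem (mem_erase.2 ⟨hvu, hvs⟩), card_erase_of_mem hus, hcard, hvu.symm]
  · intro t ht
    simp only [mem_filter, mem_powersetCard_univ, mem_compl] at ht ⊢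
    obtain ⟨hcard, hut, hvt⟩ := ht
    have hu : u ∉ insert v t := by simp [hvu.symm, hut]
    simp [card_insert_of_notMem hu, card_insert_of_notMem hvt, hcard]
  · intro s hs
    obtain ⟨-, hus, hvs⟩ := mem_filter.1 hs
    simp only [insert_erase (mem_erase.2 ⟨hvu, hvs⟩), insert_erase hus]
  · intro t ht
    obtain ⟨-, hut, hvt⟩ := mem_filter.1 ht
    have hu : u ∉ insert v t := by simp [hvu.symm, mem_compl.1 hut]
    simp only [erase_insert hu, erase_insert (mem_compl.1 hvt)]
  · intro s hs
    obtain ⟨-, hus, hvs⟩ := mem_filter.1 hs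
    have hsv : insert u ((s.erase u).erase v) = s.erase v := by
      rw [erase_right_comm, insert_erase (mem_erase.2 ⟨hvu.symm, hus⟩)]
    rw [hsv, insert_erase (mem_erase.2 ⟨hvu, hvs⟩),
      incSign_erase_mul_incSign_erase hus hvs hvu.symm]
    ring

theorem sum_sq_coboundary_add_sum_sq_coboundaryAdjoint {m : ℕ} (k : ℕ)
    (g : Finset (Fin m) → ℝ) :
    ∑ s ∈ powersetCard (k + 2) univ, coboundary g s ^ 2 +
        ∑ t ∈ powersetCard k univ, coboundaryAdjoint g t ^ 2 =
      m * ∑ F ∈ powersetCard (k + 1) univ, g F ^ 2 := by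
  have hδ : ∑ s ∈ powersetCard (k + 2) univ, coboundary g s ^ 2 =
      ∑ F ∈ powersetCard (k + 1) univ, ((m - #F : ℕ) : ℝ) * g F ^ 2 +
        ∑ s ∈ powersetCard (k + 2) univ, ∑ u ∈ s, ∑ v ∈ s.erase u,
          incSign s u * incSign s v * g (s.erase u) * g (s.erase v) := by
    simp only [coboundary, sq_sum_eq_sum_sq_add_sum_sum_erase _ _ _
      (fun _ _ => incSign_sq _ _), sum_add_distrib]
    rw [sum_powersetCard_succ_sum_erase (k + 1) fun F _ => g F ^ 2]
    simp [card_compl]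
  have hδ' : ∑ t ∈ powersetCard k univ, coboundaryAdjoint g t ^ 2 =
      ∑ F ∈ powersetCard (k + 1) univ, ((#F : ℕ) : ℝ) * g F ^ 2 +
        ∑ t ∈ powersetCard k univ, ∑ u ∈ tᶜ, ∑ v ∈ tᶜ.erase u,
          incSign (insert u t) u * incSign (insert v t) v * g (insert u t) * g (insert v t) := by
    simp only [coboundaryAdjoint, sq_sum_eq_sum_sq_add_sum_sum_erase _ _ _
      (fun _ _ => incSign_sq _ _), sum_add_distrib]
    rw [← sum_powersetCard_succ_sum_erase k fun F u => g (insert u F) ^ 2]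
    congr 1
    refine sum_congr rfl fun s _ => ?_
    rw [sum_congr rfl fun u hu => by rw [insert_erase hu], sum_const, nsmul_eq_mul]
  rw [hδ, hδ', sum_cross_terms_coboundary_eq_neg, mul_sum]
  have hdiag : ∀ F : Finset (Fin m), ((m - #F : ℕ) : ℝ) * g F ^ 2 + #F * g F ^ 2 = m * g F ^ 2 :=
    fun F => by
      rw [Nat.cast_sub (by simpa using card_le_univ F)]
      ring
  rw [← sum_congr rfl fun F _ => hdiag F, sum_add_distrib]
  ring

theorem sum_sq_coboundary_le {m : ℕ} (k : ℕ) (g : Finset (Fin m) → ℝ) :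
    ∑ s ∈ powersetCard (k + 2) univ, coboundary g s ^ 2 ≤
      m * ∑ F ∈ powersetCard (k + 1) univ, g F ^ 2 := by
  rw [← sum_sq_coboundary_add_sum_sq_coboundaryAdjoint]
  exact le_add_of_nonneg_right (sum_nonneg fun _ _ => sq_nonneg _)

theorem faces_filter_subset_eq_image_erase {m n : ℕ} {L : Finset (Finset (Fin m))}
    (hL : IsComplex L) {s : Finset (Fin m)} (hs : s ∈ faces L (n + 1)) :
    {F ∈ faces L n | F ⊆ s} = s.image s.erase := by
  obtain ⟨hsL, hscard⟩ := mem_filter.1 hs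
  ext F
  simp only [faces, mem_filter, mem_image]
  constructor
  · rintro ⟨⟨-, hFcard⟩, hFs⟩
    obtain ⟨v, hv⟩ : (s \ F).Nonempty := by
      rw [← card_pos, card_sdiff_of_subset hFs, hscard, hFcard]
      omega
    rw [mem_sdiff] at hv
    refine ⟨v, hv.1, (eq_of_subset_of_card_le (fun x hx => ?_) ?_).symm⟩
    · exact mem_erase.2 ⟨fun h => hv.2 (h ▸ hx), hFs hx⟩
    · rw [card_erase_of_mem hv.1, hscard, hFcard]; rfl
  · rintro ⟨v, hvs, rfl⟩
    have hcard : #(s.erase v) = n + 1 := by rw [card_erase_of_mem hvs, hscard]; rfl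
    exact ⟨⟨hL.2 s hsL _ (erase_subset _ _) (card_pos.1 (by omega)), hcard⟩, erase_subset _ _⟩

theorem sum_weight_mul_upLap_eq_sum_weight_mul_sq_coboundary {m n : ℕ}
    {L : Finset (Finset (Fin m))} (hL : IsComplex L) {w : Finset (Fin m) → ℝ}
    (hw : ∀ F ∈ faces L n, w F ≠ 0) (f : Finset (Fin m) → ℝ) :
    ∑ F ∈ faces L n, w F * f F * upLap L w n f F =
      ∑ s ∈ faces L (n + 1), w s * coboundary f s ^ 2 := by
  calc ∑ F ∈ faces L n, w F * f F * upLap L w n f F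
      = ∑ F ∈ faces L n, ∑ s ∈ faces L (n + 1) with F ⊆ s,
          f F * (w s * (∑ v ∈ s \ F, incSign s v) * coboundary f s) := by
        refine sum_congr rfl fun F hF => ?_
        rw [upLap, if_neg (hw F hF), mul_sum, mul_sum]
        refine sum_congr rfl fun s _ => ?_
        field_simp [hw F hF]
    _ = ∑ s ∈ faces L (n + 1), ∑ F ∈ faces L n with F ⊆ s,
          f F * (w s * (∑ v ∈ s \ F, incSign s v) * coboundary f s) := by
        simp only [sum_filter]
        exact sum_comm
    _ = ∑ s ∈ faces L (n + 1), w s * coboundary f s * coboundary f s := by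
        refine sum_congr rfl fun s hs => ?_
        rw [faces_filter_subset_eq_image_erase hL hs, sum_image (erase_injOn s), coboundary, mul_sum]
        refine sum_congr rfl fun v hv => ?_
        rw [sdiff_erase_self hv, sum_singleton]
        ring
    _ = _ := by simp only [sq, mul_assoc]

theorem eigenvalue_le_card_div {m n : ℕ} {L : Finset (Finset (Fin m))} (hL : IsComplex L)
    {w : Finset (Fin m) → ℝ} (hpos : ∀ s ∈ L, 0 < w s) (hle1 : ∀ s ∈ L, w s ≤ 1)
    {c : ℝ} (hc : 0 < c) (hcw : ∀ F ∈ faces L n, c ≤ w F)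
    {f : Finset (Fin m) → ℝ} (hf : f ≠ 0) (hsupp : ∀ F ∉ faces L n, f F = 0) {θ : ℝ}
    (heig : ∀ F ∈ faces L n, upLap L w n f F = θ * f F) :
    θ ≤ m / c := by
  have hfaces : ∀ {k F}, F ∈ faces L k → F ∈ L ∧ #F = k + 1 := mem_filter.1
  have hnorm : 0 < ∑ F ∈ faces L n, w F * f F ^ 2 := by
    obtain ⟨F, hF⟩ := Function.ne_iff.1 hf
    have hFn : F ∈ faces L n := by_contra fun h => hF (hsupp F h)
    exact sum_pos' (fun G hG => mul_nonneg (hpos G (hfaces hG).1).le (sq_nonneg _))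
      ⟨F, hFn, mul_pos (hpos F (hfaces hFn).1) (sq_pos_of_ne_zero hF)⟩
  refine le_of_mul_le_mul_right ?_ hnorm
  calc θ * ∑ F ∈ faces L n, w F * f F ^ 2
      = ∑ s ∈ faces L (n + 1), w s * coboundary f s ^ 2 := by
        rw [← sum_weight_mul_upLap_eq_sum_weight_mul_sq_coboundary hL
          (fun F hF => (hpos F (hfaces hF).1).ne'), mul_sum]
        exact sum_congr rfl fun F hF => by rw [heig F hF]; ring
    _ ≤ ∑ s ∈ faces L (n + 1), coboundary f s ^ 2 :=
        sum_le_sum fun s hs => mul_le_of_le_one_left (sq_nonneg _) (hle1 s (hfaces hs).1)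
    _ ≤ ∑ s ∈ powersetCard (n + 2) univ, coboundary f s ^ 2 :=
        sum_le_sum_of_subset_of_nonneg (fun s hs => mem_powersetCard_univ.2 (hfaces hs).2)
          fun _ _ _ => sq_nonneg _
    _ ≤ m * ∑ F ∈ powersetCard (n + 1) univ, f F ^ 2 := sum_sq_coboundary_le n f
    _ = m * ∑ F ∈ faces L n, f F ^ 2 := by
        rw [sum_subset (fun F hF => mem_powersetCard_univ.2 (hfaces hF).2)
          fun F _ hF => by simp [hsupp F hF]]
    _ ≤ m * ∑ F ∈ faces L n, w F / c * f F ^ 2 := by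
        gcongr with F hF
        exact le_mul_of_one_le_left (sq_nonneg _) ((one_le_div hc).2 (hcw F hF))
    _ = m / c * ∑ F ∈ faces L n, w F * f F ^ 2 := by
        rw [mul_sum, mul_sum]
        exact sum_congr rfl fun F _ => by ring

theorem stmt_10_general {N n M : ℕ} (L : Finset (Finset (Fin N)))
    (hL : IsComplex L)
    (wL : Finset (Fin N) → ℝ)
    (hpos : ∀ s ∈ L, 0 < wL s) (hle1 : ∀ s ∈ L, wL s ≤ 1)
    (theta : Fin M → ℝ) (htheta : eigenseq L wL n theta) (k : Fin M) :
    theta k ≤ (N : ℝ) / sInf {r : ℝ | ∃ F ∈ faces L n, r = wL F} ∧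
    ((∀ s ∈ L, wL s = 1) → theta k ≤ (N : ℝ)) := by
  obtain ⟨-, hM, f, hlin, hsupp, heig⟩ := htheta
  set W := {r : ℝ | ∃ F ∈ faces L n, r = wL F}
  have hWfin : W.Finite := by
    convert (faces L n).finite_toSet.image wL using 1
    ext; simp [W, eq_comm]
  have hfaces : (faces L n).Nonempty := card_pos.1 (hM ▸ k.pos)
  have hWne : W.Nonempty := hfaces.image wL |>.imp fun _ h => by simpa [W, eq_comm] using h
  obtain ⟨F₀, hF₀, hF₀W⟩ := hWne.csInf_mem hWfin
  have hbound : theta k ≤ N / sInf W :=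
    eigenvalue_le_card_div hL hpos hle1 (hF₀W ▸ hpos F₀ (mem_filter.1 hF₀).1)
      (fun F hF => csInf_le hWfin.bddBelow ⟨F, hF, rfl⟩) (hlin.ne_zero k) (hsupp k)
      (heig k)
  refine ⟨hbound, fun hone => ?_⟩
  rwa [hF₀W, hone F₀ (mem_filter.1 hF₀).1, div_one] at hbound

/-- **Eigenvalue bound (Corollary 2.18).** Let `(L,w_L)` be a weighted simplicial complex
on `N` vertices with positive weights, all at most `1`. Then every eigenvalue of the
weighted up-Laplacian `L^{up}_n(L, w_L)` is at most `N / min{w_L(F) : F ∈ S_n(L)}`;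
in particular if `w_L ≡ 1` every eigenvalue is at most `N`. -/
theorem stmt_10 {N n M : ℕ} (L : Finset (Finset (Fin N)))
    (hL : IsComplex L) (hvert : ∀ v : Fin N, ({v} : Finset (Fin N)) ∈ L)
    (wL : Finset (Fin N) → ℝ)
    (hpos : ∀ s ∈ L, 0 < wL s) (hle1 : ∀ s ∈ L, wL s ≤ 1)
    (theta : Fin M → ℝ) (htheta : eigenseq L wL n theta) (k : Fin M) :
    theta k ≤ (N : ℝ) / sInf {r : ℝ | ∃ F ∈ faces L n, r = wL F} ∧
    ((∀ s ∈ L, wL s = 1) → theta k ≤ (N : ℝ)) :=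
  stmt_10_general L hL wL hpos hle1 theta htheta k
end

section
/- Let φ : K → L be a covering map of finite simplicial complexes (every simplex of L has preimage a disjoint union of simplices each mapped bijectively), with weight functions satisfying w_L(G) = Σ_{F : φ(F) = G} w_K(F) for every simplex G of L. Then the diagram φ* ∘ L^{up}_n(K) ∘ φ = L^{up}_n(L) commutes, where φ : C^n(L) → C^n(K) is the induced cochain map and φ* its adjoint with respect to the weighted inner products. -/
/-- The orientation sign of the image of the simplex `F` under the vertex map `φ`,
with respect to canonical (increasing) orderings: `0` if the image is degenerate,
otherwise the sign of the permutation sorting the image list. -/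
def mapSign {a b : ℕ} (φ : Fin a → Fin b) (F : Finset (Fin a)) : ℝ :=
  let l : List (Fin b) := (F.sort (· ≤ ·)).map φ
  if l.Nodup then
    (-1 : ℝ) ^ (Finset.univ.filter
      (fun p : Fin l.length × Fin l.length => p.1 < p.2 ∧ l.get p.2 < l.get p.1)).card
  else 0

/-- The cochain map induced by a vertex map `φ`:
`(φ g)([v₀,…,v_n]) = g([φ(v₀),…,φ(v_n)])` (zero on degenerate images). -/
noncomputable def pullback {a b : ℕ} (φ : Fin a → Fin b) (g : Finset (Fin b) → ℝ)
    (F : Finset (Fin a)) : ℝ :=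
  mapSign φ F * g (F.image φ)

/-- The formal adjoint `φ^*` of the induced cochain map with respect to the
weighted inner products on `C^n(K, w_K)` and `C^n(L, w_L)`. -/
noncomputable def pushforward {a b : ℕ} (φ : Fin a → Fin b) (K : Finset (Finset (Fin a)))
    (wK : Finset (Fin a) → ℝ) (wL : Finset (Fin b) → ℝ) (n : ℕ)
    (f : Finset (Fin a) → ℝ) (G : Finset (Fin b)) : ℝ :=
  if wL G = 0 then 0 else
    (wL G)⁻¹ * ∑ F ∈ (faces K n).filter (fun F => F.image φ = G),
      wK F * mapSign φ F * f F

/-- `φ` is a simplicial covering map from `K` to `L`: it is simplicial, and the preimage of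
every simplex of `L` is a (nonempty) union of pairwise disjoint simplices of `K`, each of
which is mapped bijectively onto it. -/
def IsCovering {a b : ℕ} (φ : Fin a → Fin b) (K : Finset (Finset (Fin a)))
    (L : Finset (Finset (Fin b))) : Prop :=
  (∀ s ∈ K, s.image φ ∈ L) ∧
  ∀ G ∈ L, (∃ F ∈ K, F.image φ = G) ∧
    (∀ F ∈ K, F.image φ = G → F.card = G.card) ∧
    ∀ F ∈ K, ∀ F' ∈ K, F.image φ = G → F'.image φ = G → F ≠ F' → Disjoint F F'

/-- The strong covering condition in dimension `n`: for every `(n+1)`-simplex `Gb` of `L`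
with facet `G`, and every `F` in the fiber over `G`, there is an `(n+1)`-simplex `Fb` of
`K` containing `F` with `φ(Fb) = Gb`. -/
def StrongAt {a b : ℕ} (φ : Fin a → Fin b) (K : Finset (Finset (Fin a)))
    (L : Finset (Finset (Fin b))) (n : ℕ) : Prop :=
  ∀ Gb ∈ faces L (n + 1), ∀ G ∈ faces L n, G ⊆ Gb →
    ∀ F ∈ faces K n, F.image φ = G →
      ∃ Fb ∈ faces K (n + 1), F ⊆ Fb ∧ Fb.image φ = Gb

/-- `L` is `(n+1)`-path connected: any two `(n+1)`-simplices are joined by a chain of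
`(n+1)`-simplices in which consecutive ones are `n`-down neighbours (share an `n`-face). -/
def UpConn {b : ℕ} (L : Finset (Finset (Fin b))) (n : ℕ) : Prop :=
  ∀ s ∈ faces L (n + 1), ∀ t ∈ faces L (n + 1),
    Relation.ReflTransGen (fun x y => y ∈ faces L (n + 1) ∧ (x ∩ y).card = n + 1) s t

/-- `μ` is an eigenvalue of the weighted up-Laplacian `L^{up}_n(K, w)`. -/
def IsUpEig {m : ℕ} (K : Finset (Finset (Fin m))) (w : Finset (Fin m) → ℝ) (n : ℕ)
    (μ : ℝ) : Prop :=
  ∃ g : Finset (Fin m) → ℝ, g ≠ 0 ∧ (∀ F, F ∉ faces K n → g F = 0) ∧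
    ∀ F ∈ faces K n, upLap K w n g F = μ * g F

/-- The normalizing weight function: weight `1` on `(n+1)`-simplices and the degree
(number of `(n+1)`-cofaces) on lower simplices. -/
def normWeight {m : ℕ} (K : Finset (Finset (Fin m))) (n : ℕ) (F : Finset (Fin m)) : ℝ :=
  if F.card = n + 2 then 1
  else (((faces K (n + 1)).filter fun s => F ⊆ s).card : ℝ)

/-! Pulling back along `φ` commutes with the coboundary up to the orientation sign `mapSign`,
and the identity `incSign s v * mapSign φ (s.erase v) = mapSign φ s * incSign (φ s) (φ v)` makes
each summand of `φ^* L^{up}_n(K) φ g` at `G` equal to the summand of `L^{up}_n(L) g` indexed by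
the image of the coface. An `(n+1)`-simplex `s` with `G ⊆ φ s` contains exactly one
`n`-simplex over `G`, so the double sum over pairs `F ⊆ s` collapses to a sum over the
`(n+1)`-simplices of `K` above `G`; grouping these by their image turns the weights `w_K`
into `w_L`. -/

open Finset

theorem List.idxOf_eq_countP_lt {α : Type*} [LinearOrder α] :
    ∀ {l : List α}, l.Pairwise (· < ·) → ∀ {v : α}, v ∈ l → l.idxOf v = l.countP (· < v)
  | [], _, _, hv => absurd hv List.not_mem_nil
  | x :: l, hl, v, hv => by
    rw [List.pairwise_cons] at hl
    rcases List.mem_cons.mp hv with rfl | hv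
    · simpa using (List.countP_eq_zero.mpr fun y hy => by simpa using (hl.1 y hy).le).symm
    · have hxv := hl.1 v hv
      simp [hxv.ne, hxv, List.idxOf_eq_countP_lt hl.2 hv]

theorem Finset.idxOf_sort_eq_card_filter_lt {α : Type*} [LinearOrder α] {s : Finset α} {v : α}
    (hv : v ∈ s) : (s.sort (· ≤ ·)).idxOf v = #{x ∈ s | x < v} := by
  rw [List.idxOf_eq_countP_lt s.sortedLT_sort.pairwise ((mem_sort _).2 hv),
    ← Multiset.coe_countP, sort_eq, Multiset.countP_eq_card_filter]
  rfl

theorem neg_one_pow_card_filter {ι : Type*} (s : Finset ι) (p : ι → Prop) [DecidablePred p] :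
    (-1 : ℝ) ^ #{x ∈ s | p x} = ∏ x ∈ s, if p x then -1 else 1 := by
  rw [← prod_const, prod_filter]

theorem Finset.image_erase_of_injOn {α β : Type*} [DecidableEq α] [DecidableEq β] {f : α → β}
    {s : Finset α} (hf : Set.InjOn f s) {a : α} (ha : a ∈ s) :
    (s.erase a).image f = (s.image f).erase (f a) := by
  ext y
  simp only [mem_image, mem_erase]
  constructor
  · rintro ⟨x, ⟨hxa, hxs⟩, rfl⟩
    exact ⟨fun e => hxa (hf hxs ha e), x, hxs, rfl⟩
  · rintro ⟨hy, x, hxs, rfl⟩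
    exact ⟨x, ⟨fun e => hy (e ▸ rfl), hxs⟩, rfl⟩

theorem incSign_eq_prod {m : ℕ} {s : Finset (Fin m)} {v : Fin m} (hv : v ∈ s) :
    incSign s v = ∏ x ∈ s, if x < v then -1 else 1 := by
  rw [incSign, idxOf_sort_eq_card_filter_lt hv, neg_one_pow_card_filter]

theorem card_inversions_sort_map {a b : ℕ} (φ : Fin a → Fin b) (s : Finset (Fin a)) :
    #{p : Fin ((s.sort (· ≤ ·)).map φ).length × Fin ((s.sort (· ≤ ·)).map φ).length |
        p.1 < p.2 ∧ ((s.sort (· ≤ ·)).map φ).get p.2 < ((s.sort (· ≤ ·)).map φ).get p.1}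
      = #{p ∈ s ×ˢ s | p.1 < p.2 ∧ φ p.2 < φ p.1} := by
  set l := s.sort (· ≤ ·)
  have hlen : (l.map φ).length = l.length := List.length_map _
  let e : Fin (l.map φ).length → Fin a := fun i => l.get (i.cast hlen)
  have he : StrictMono e := fun i j hij =>
    List.SortedLT.strictMono_get s.sortedLT_sort hij
  have hget (i : Fin (l.map φ).length) : (l.map φ).get i = φ (e i) := by
    simp only [e, List.get_eq_getElem, List.getElem_map, Fin.val_cast]
  have hsurj {x : Fin a} (hx : x ∈ s) : ∃ i, e i = x := by
    obtain ⟨i, rfl⟩ := List.mem_iff_get.mp ((mem_sort (α := Fin a) (· ≤ ·)).2 hx)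
    exact ⟨i.cast hlen.symm, rfl⟩
  apply card_bij (fun p _ => (e p.1, e p.2))
  · intro p hp
    simp only [mem_filter, mem_univ, true_and, hget] at hp
    have hmem (i) : e i ∈ s := (mem_sort (α := Fin a) (· ≤ ·)).1 (l.get_mem _)
    simpa [hmem, he.lt_iff_lt] using hp
  · intro p _ q _ h
    simp only [Prod.mk.injEq, he.injective.eq_iff] at h
    exact Prod.ext h.1 h.2
  · rintro ⟨x, y⟩ hq
    simp only [mem_filter, mem_product] at hq
    obtain ⟨⟨hx, hy⟩, hlt, hφ⟩ := hq
    obtain ⟨i, rfl⟩ := hsurj hx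
    obtain ⟨j, rfl⟩ := hsurj hy
    refine ⟨(i, j), ?_, rfl⟩
    simp only [mem_filter, mem_univ, true_and, hget]
    exact ⟨he.lt_iff_lt.1 hlt, hφ⟩

theorem mapSign_eq_prod {a b : ℕ} (φ : Fin a → Fin b) {s : Finset (Fin a)}
    (h : Set.InjOn φ s) :
    mapSign φ s = ∏ x ∈ s, ∏ y ∈ s, if x < y ∧ φ y < φ x then -1 else 1 := by
  have hnodup : ((s.sort (· ≤ ·)).map φ).Nodup :=
    (List.nodup_map_iff_inj_on (sort_nodup _ _)).2 fun x hx y hy =>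
      h ((mem_sort _).1 hx) ((mem_sort _).1 hy)
  rw [mapSign, if_pos hnodup, card_inversions_sort_map, neg_one_pow_card_filter, prod_product]

theorem mapSign_mul_self {a b : ℕ} (φ : Fin a → Fin b) {s : Finset (Fin a)}
    (h : Set.InjOn φ s) : mapSign φ s * mapSign φ s = 1 := by
  rw [mapSign_eq_prod φ h, ← prod_mul_distrib]
  refine prod_eq_one fun x _ => ?_
  rw [← prod_mul_distrib]
  exact prod_eq_one fun y _ => by split_ifs <;> norm_num

theorem mapSign_eq_mapSign_erase_mul {a b : ℕ} (φ : Fin a → Fin b) {s : Finset (Fin a)}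
    (h : Set.InjOn φ s) {v : Fin a} (hv : v ∈ s) :
    mapSign φ s = mapSign φ (s.erase v) * ∏ x ∈ s.erase v,
      (if x < v ∧ φ v < φ x then -1 else 1) * (if v < x ∧ φ x < φ v then -1 else 1) := by
  rw [mapSign_eq_prod φ h, mapSign_eq_prod φ (h.mono (by simp)), prod_mul_distrib]
  conv_lhs => rw [← insert_erase hv]
  simp only [prod_insert (notMem_erase v s), prod_mul_distrib, lt_irrefl, false_and, ite_false,
    one_mul]
  ring

theorem incSign_mul_mapSign_erase {a b : ℕ} (φ : Fin a → Fin b) {s : Finset (Fin a)}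
    (h : Set.InjOn φ s) {v : Fin a} (hv : v ∈ s) :
    incSign s v * mapSign φ (s.erase v) = mapSign φ s * incSign (s.image φ) (φ v) := by
  -- Vertex by vertex: `x` lies below `v` in `s` iff `φ x` lies below `φ v`, unless the pair
  -- `{x, v}` is an inversion of `φ`.
  have hpt : ∀ x ∈ s.erase v, (if x < v then -1 else 1 : ℝ) =
      (if x < v ∧ φ v < φ x then -1 else 1) * (if v < x ∧ φ x < φ v then -1 else 1) *
        (if φ x < φ v then -1 else 1) := by
    intro x hx
    obtain ⟨hxv, hxs⟩ := mem_erase.1 hx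
    have hφ : φ x ≠ φ v := fun e => hxv (h hxs hv e)
    rcases hxv.lt_or_gt with hxv | hxv <;> rcases hφ.lt_or_gt with hφ | hφ <;>
      simp [hxv, hφ, hxv.not_gt, hφ.not_gt]
  rw [incSign_eq_prod hv, incSign_eq_prod (mem_image_of_mem φ hv), prod_image fun x hx y hy e =>
    h hx hy e, mapSign_eq_mapSign_erase_mul φ h hv, ← mul_prod_erase s _ hv,
    ← mul_prod_erase s _ hv, prod_congr rfl hpt, prod_mul_distrib]
  simp only [lt_irrefl, ite_false, one_mul]
  ring

theorem coboundary_pullback {a b : ℕ} (φ : Fin a → Fin b) (g : Finset (Fin b) → ℝ)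
    {s : Finset (Fin a)} (h : Set.InjOn φ s) :
    coboundary (pullback φ g) s = mapSign φ s * coboundary g (s.image φ) := by
  rw [coboundary, coboundary, mul_sum, sum_image fun x hx y hy e => h hx hy e]
  refine sum_congr rfl fun v hv => ?_
  rw [pullback, image_erase_of_injOn h hv, ← mul_assoc, incSign_mul_mapSign_erase φ h hv,
    mul_assoc]

theorem mapSign_mul_incidence_mul_coboundary_pullback {a b : ℕ} (φ : Fin a → Fin b)
    (g : Finset (Fin b) → ℝ) {F s : Finset (Fin a)} (h : Set.InjOn φ s) (hFs : F ⊆ s)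
    (hcard : #F + 1 = #s) :
    mapSign φ F * ((∑ v ∈ s \ F, incSign s v) * coboundary (pullback φ g) s)
      = (∑ w ∈ s.image φ \ F.image φ, incSign (s.image φ) w) * coboundary g (s.image φ) := by
  obtain ⟨v, hvF, rfl⟩ := exists_eq_insert_iff.2 ⟨hFs, hcard⟩
  have hφv : φ v ∉ F.image φ := fun hv => by
    obtain ⟨x, hx, e⟩ := mem_image.1 hv
    exact hvF (h (mem_insert_self v F) (mem_insert_of_mem hx) e.symm ▸ hx)
  have hsign := incSign_mul_mapSign_erase φ h (mem_insert_self v F)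
  rw [erase_insert hvF] at hsign
  rw [image_insert, insert_sdiff_cancel hvF, insert_sdiff_cancel hφv, sum_singleton,
    sum_singleton, ← image_insert, coboundary_pullback φ g h]
  linear_combination (mapSign φ (insert v F) * coboundary g ((insert v F).image φ)) * hsign
    + (coboundary g ((insert v F).image φ) * incSign ((insert v F).image φ) (φ v)) *
      mapSign_mul_self φ h

namespace IsCovering

variable {a b : ℕ} {φ : Fin a → Fin b} {K : Finset (Finset (Fin a))}
  {L : Finset (Finset (Fin b))}

theorem injOn (hcov : IsCovering φ K L) {s : Finset (Fin a)} (hs : s ∈ K) :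
    Set.InjOn φ s :=
  card_image_iff.1 ((hcov.2 _ (hcov.1 s hs)).2.1 s hs rfl).symm

theorem image_mem_faces (hcov : IsCovering φ K L) {k : ℕ} {s : Finset (Fin a)}
    (hs : s ∈ faces K k) : s.image φ ∈ faces L k := by
  obtain ⟨hsK, hcard⟩ := mem_filter.1 hs
  exact mem_filter.2 ⟨hcov.1 s hsK, (card_image_of_injOn (hcov.injOn hsK)).trans hcard⟩

theorem weight_pos (hcov : IsCovering φ K L) {wK : Finset (Fin a) → ℝ}
    {wL : Finset (Fin b) → ℝ} (hposK : ∀ s ∈ K, 0 < wK s)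
    (hw : ∀ G ∈ L, wL G = ∑ F ∈ K.filter (fun F => F.image φ = G ∧ F.card = G.card), wK F)
    {G : Finset (Fin b)} (hG : G ∈ L) : 0 < wL G := by
  obtain ⟨F, hFK, hFG⟩ := (hcov.2 G hG).1
  rw [hw G hG]
  exact sum_pos (fun F hF => hposK F (mem_filter.1 hF).1)
    ⟨F, mem_filter.2 ⟨hFK, hFG, (hcov.2 G hG).2.1 F hFK hFG⟩⟩

theorem sum_faces_weight_mul_image (hcov : IsCovering φ K L) {wK : Finset (Fin a) → ℝ}
    {wL : Finset (Fin b) → ℝ}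
    (hw : ∀ G ∈ L, wL G = ∑ F ∈ K.filter (fun F => F.image φ = G ∧ F.card = G.card), wK F)
    (k : ℕ) (P : Finset (Fin b) → Prop) [DecidablePred P] (c : Finset (Fin b) → ℝ) :
    ∑ s ∈ faces K k with P (s.image φ), wK s * c (s.image φ)
      = ∑ t ∈ faces L k with P t, wL t * c t := by
  have hmaps : ∀ s ∈ {s ∈ faces K k | P (s.image φ)}, s.image φ ∈ {t ∈ faces L k | P t} :=
    fun s hs => mem_filter.2 ⟨hcov.image_mem_faces (mem_filter.1 hs).1, (mem_filter.1 hs).2⟩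
  rw [← sum_fiberwise_of_maps_to hmaps]
  refine sum_congr rfl fun t ht => ?_
  obtain ⟨htL, htk⟩ := mem_filter.1 (mem_filter.1 ht).1
  have hfiber : {s ∈ {s ∈ faces K k | P (s.image φ)} | s.image φ = t}
      = K.filter (fun F => F.image φ = t ∧ F.card = t.card) := by
    ext F
    simp only [faces, mem_filter]
    constructor
    · rintro ⟨⟨⟨hFK, hFk⟩, -⟩, rfl⟩
      exact ⟨hFK, rfl, (card_image_of_injOn (hcov.injOn hFK)).symm⟩
    · rintro ⟨hFK, rfl, hFt⟩
      exact ⟨⟨⟨hFK, hFt.trans htk⟩, (mem_filter.1 ht).2⟩, rfl⟩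
  rw [hw t htL, ← hfiber, sum_mul]
  exact sum_congr rfl fun s hs => by rw [(mem_filter.1 hs).2]


theorem card_fiber_subset (hK : IsComplex K) (hcov : IsCovering φ K L) {n : ℕ}
    {G : Finset (Fin b)} (hG : #G = n + 1) {s : Finset (Fin a)} (hs : s ∈ K) :
    #{F ∈ (faces K n).filter (fun F => F.image φ = G) | F ⊆ s}
      = if G ⊆ s.image φ then 1 else 0 := by
  split_ifs with hGs
  · set F₀ := s.filter (fun x => φ x ∈ G)
    have hF₀s : F₀ ⊆ s := filter_subset _ _
    have hF₀G : F₀.image φ = G := by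
      ext y
      constructor
      · rintro hy
        obtain ⟨x, hx, rfl⟩ := mem_image.1 hy
        exact (mem_filter.1 hx).2
      · intro hy
        obtain ⟨x, hx, rfl⟩ := mem_image.1 (hGs hy)
        exact mem_image_of_mem φ (mem_filter.2 ⟨hx, hy⟩)
    have hF₀card : #F₀ = n + 1 := by
      rw [← hG, ← hF₀G, card_image_of_injOn ((hcov.injOn hs).mono hF₀s)]
    have hF₀K : F₀ ∈ K := hK.2 s hs F₀ hF₀s (card_pos.1 (by omega))
    refine card_eq_one.2 ⟨F₀, eq_singleton_iff_unique_mem.2 ⟨?_, fun F hF => ?_⟩⟩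
    · exact mem_filter.2 ⟨mem_filter.2 ⟨mem_filter.2 ⟨hF₀K, hF₀card⟩, hF₀G⟩, hF₀s⟩
    · obtain ⟨⟨hFn, rfl⟩, hFs⟩ := mem_filter.1 hF |>.imp_left mem_filter.1
      refine eq_of_subset_of_card_le (fun x hx => mem_filter.2 ⟨hFs hx, mem_image_of_mem φ hx⟩) ?_
      rw [hF₀card, (mem_filter.1 hFn).2]
  · refine card_eq_zero.2 (filter_eq_empty_iff.2 fun F hF hFs => hGs ?_)
    rw [← (mem_filter.1 hF).2]
    exact image_subset_image hFs

theorem sum_fiber_sum_superset (hK : IsComplex K) (hcov : IsCovering φ K L) {n : ℕ}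
    {G : Finset (Fin b)} (hG : #G = n + 1) (f : Finset (Fin a) → ℝ) :
    ∑ F ∈ (faces K n).filter (fun F => F.image φ = G), ∑ s ∈ faces K (n + 1) with F ⊆ s, f s
      = ∑ s ∈ faces K (n + 1) with G ⊆ s.image φ, f s := by
  rw [sum_comm' (t' := faces K (n + 1))
    (s' := fun s => {F ∈ (faces K n).filter (fun F => F.image φ = G) | F ⊆ s})
    (fun F s => by simp only [mem_filter]; tauto), sum_filter]
  refine sum_congr rfl fun s hs => ?_
  rw [sum_const, card_fiber_subset hK hcov hG (mem_filter.1 hs).1]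
  split_ifs <;> simp

theorem mapSign_mul_upLap_pullback (hcov : IsCovering φ K L) {wK : Finset (Fin a) → ℝ}
    {n : ℕ} {F : Finset (Fin a)} (hF : F ∈ faces K n) (hwF : wK F ≠ 0)
    (g : Finset (Fin b) → ℝ) :
    wK F * mapSign φ F * upLap K wK n (pullback φ g) F
      = ∑ s ∈ faces K (n + 1) with F ⊆ s,
          wK s * ((∑ w ∈ s.image φ \ F.image φ, incSign (s.image φ) w)
            * coboundary g (s.image φ)) := by
  rw [upLap, if_neg hwF, mul_sum, mul_sum]
  refine sum_congr rfl fun s hs => ?_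
  obtain ⟨⟨hsK, hscard⟩, hFs⟩ := mem_filter.1 hs |>.imp_left mem_filter.1
  rw [← mapSign_mul_incidence_mul_coboundary_pullback φ g (hcov.injOn hsK) hFs
    (by rw [hscard, (mem_filter.1 hF).2])]
  field_simp

end IsCovering

theorem stmt_11_general {a b n : ℕ} (K : Finset (Finset (Fin a))) (L : Finset (Finset (Fin b)))
    (hK : IsComplex K)
    (φ : Fin a → Fin b) (hcov : IsCovering φ K L)
    (wK : Finset (Fin a) → ℝ) (wL : Finset (Fin b) → ℝ)
    (hposK : ∀ s ∈ K, 0 < wK s)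
    (hw : ∀ G ∈ L, wL G
        = ∑ F ∈ K.filter (fun F => F.image φ = G ∧ F.card = G.card), wK F)
    (g : Finset (Fin b) → ℝ) (G : Finset (Fin b)) (hG : G ∈ faces L n) :
    pushforward φ K wK wL n (fun F => upLap K wK n (pullback φ g) F) G
      = upLap L wL n g G := by
  obtain ⟨hGL, hGcard⟩ := mem_filter.1 hG
  have hwG : wL G ≠ 0 := (hcov.weight_pos hposK hw hGL).ne'
  rw [pushforward, upLap, if_neg hwG, if_neg hwG]
  congr 1
  calc ∑ F ∈ (faces K n).filter (fun F => F.image φ = G),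
        wK F * mapSign φ F * upLap K wK n (pullback φ g) F
      = ∑ F ∈ (faces K n).filter (fun F => F.image φ = G), ∑ s ∈ faces K (n + 1) with F ⊆ s,
          wK s * ((∑ w ∈ s.image φ \ G, incSign (s.image φ) w) * coboundary g (s.image φ)) := by
        refine sum_congr rfl fun F hF => ?_
        obtain ⟨hFn, rfl⟩ := mem_filter.1 hF
        exact hcov.mapSign_mul_upLap_pullback hFn (hposK F (mem_filter.1 hFn).1).ne' g
    _ = ∑ s ∈ faces K (n + 1) with G ⊆ s.image φ,
          wK s * ((∑ w ∈ s.image φ \ G, incSign (s.image φ) w) * coboundary g (s.image φ)) :=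
        hcov.sum_fiber_sum_superset hK hGcard _
    _ = ∑ t ∈ faces L (n + 1) with G ⊆ t,
          wL t * ((∑ w ∈ t \ G, incSign t w) * coboundary g t) :=
        hcov.sum_faces_weight_mul_image hw (n + 1) (G ⊆ ·)
          (fun t => (∑ w ∈ t \ G, incSign t w) * coboundary g t)
    _ = _ := sum_congr rfl fun t _ => (mul_assoc _ _ _).symm

/-- **Lemma 3.5: coverings intertwine Laplacians.** If `φ : K → L` is a covering map of
finite complexes and the weights satisfy `w_L(G) = Σ_{F : φ(F)=G} w_K(F)`, then
`φ^* ∘ L^{up}_n(K) ∘ φ = L^{up}_n(L)` on `n`-cochains. -/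
theorem stmt_11 {a b n : ℕ} (K : Finset (Finset (Fin a))) (L : Finset (Finset (Fin b)))
    (hK : IsComplex K) (hL : IsComplex L)
    (φ : Fin a → Fin b) (hcov : IsCovering φ K L)
    (wK : Finset (Fin a) → ℝ) (wL : Finset (Fin b) → ℝ)
    (hposK : ∀ s ∈ K, 0 < wK s)
    (hw : ∀ G ∈ L, wL G
        = ∑ F ∈ K.filter (fun F => F.image φ = G ∧ F.card = G.card), wK F)
    (g : Finset (Fin b) → ℝ) (G : Finset (Fin b)) (hG : G ∈ faces L n) :
    pushforward φ K wK wL n (fun F => upLap K wK n (pullback φ g) F) G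
      = upLap L wL n g G :=
  stmt_11_general K L hK φ hcov wK wL hposK hw g G hG
end
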